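/- Balanced Ordinal Sum Theorem: Let G ≅ ⟨x | y⟩ be a ball with x, y and G numbers such that, as values, G − x = y − G = 1/2^p for some integer p ≥ 0 (a balanced ball of radius 1/2^p with midpoint n equal to the value of G). Let m ≥ 0 and q ≥ 0 be integers and let a be either 0 or an odd integer with 0 < a < 2^q, and suppose m + a/2^q > 0. Then for every number H whose value is m + a/2^q, G : H = n + 1/2^p − 1/2^{p+m} + a/2^{p+m+q+1}. -/

import Mathlib

/-! Combinatorial game theory (`SetTheory.PGame`, `SetTheory.Game`) has been removed from
Mathlib; the notions the statement uses are re-defined here with their old meaning. -/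

noncomputable section

section OldCGT

universe w

namespace SetTheory

/-- Pre-games, as in the old Mathlib. -/
inductive PGame : Type (w + 1)
  | mk : ∀ α β : Type w, (α → PGame) → (β → PGame) → PGame

namespace PGame

/-- The type of Left moves. -/
def LeftMoves : PGame.{w} → Type w
  | mk l _ _ _ => l

/-- The type of Right moves. -/
def RightMoves : PGame.{w} → Type w
  | mk _ r _ _ => r

/-- The Left options. -/
def moveLeft : ∀ g : PGame.{w}, LeftMoves g → PGame.{w}
  | mk _l _ L _ => L

/-- The Right options. -/
def moveRight : ∀ g : PGame.{w}, RightMoves g → PGame.{w}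
  | mk _ _r _ R => R

/-- The pair `(x ≤ y, y ≤ x)`, where `x ≤ y` holds iff no Left option `xL` of `x` has
`y ≤ xL` and no Right option `yR` of `y` has `yR ≤ x` (the old `le_iff_forall_lf`). -/
def lePair (x : PGame.{w}) : PGame.{w} → Prop × Prop :=
  PGame.rec (motive := fun _ => PGame.{w} → Prop × Prop)
    (fun _ _ _ _ IHxL IHxR y =>
      PGame.rec (motive := fun _ => Prop × Prop)
        (fun yl yr yL yR IHyL IHyR =>
          ((∀ i, ¬ (IHxL i (mk yl yr yL yR)).2) ∧ (∀ j, ¬ (IHyR j).2),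
           (∀ i, ¬ (IHyL i).1) ∧ (∀ j, ¬ (IHxR j (mk yl yr yL yR)).1)))
        y) x

instance : LE PGame.{w} := ⟨fun x y => (lePair x y).1⟩

/-- `x < y` iff `x ≤ y` and not `y ≤ x` (the old preorder's `<`). -/
instance : LT PGame.{w} := ⟨fun x y => x ≤ y ∧ ¬ y ≤ x⟩

instance : Zero PGame.{w} := ⟨mk PEmpty PEmpty PEmpty.elim PEmpty.elim⟩

instance : One PGame.{w} := ⟨mk PUnit PEmpty (fun _ => 0) PEmpty.elim⟩

/-- Negation of a pre-game. -/
def neg : PGame.{w} → PGame.{w}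
  | mk l r L R => mk r l (fun i => neg (R i)) (fun i => neg (L i))

instance : Neg PGame.{w} := ⟨neg⟩

/-- Sum of pre-games. -/
def add (x : PGame.{w}) : PGame.{w} → PGame.{w} :=
  PGame.rec (motive := fun _ => PGame.{w} → PGame.{w})
    (fun xl xr _ _ IHxL IHxR y =>
      PGame.rec (motive := fun _ => PGame.{w})
        (fun yl yr yL yR IHyL IHyR =>
          mk (xl ⊕ yl) (xr ⊕ yr) (Sum.elim (fun i => IHxL i (mk yl yr yL yR)) IHyL)
            (Sum.elim (fun i => IHxR i (mk yl yr yL yR)) IHyR))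
        y) x

instance : Add PGame.{w} := ⟨add⟩

instance : Sub PGame.{w} := ⟨fun x y => x + -y⟩

/-- Numeric pre-games. -/
def Numeric : PGame.{w} → Prop
  | mk _ _ L R => (∀ i j, L i < R j) ∧ (∀ i, Numeric (L i)) ∧ ∀ j, Numeric (R j)

/-- The pre-game `2 ^ (-n)`. -/
def powHalf : ℕ → PGame.{w}
  | 0 => 1
  | n + 1 => mk PUnit PUnit (fun _ => 0) (fun _ => powHalf n)

/-- Game equivalence, as a setoid.  `x ≈ y` iff `x ≤ y ∧ y ≤ x`; this relation is an
equivalence relation, so its equivalence closure is itself. -/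
instance setoid : Setoid PGame.{w} :=
  Relation.EqvGen.setoid (fun x y : PGame.{w} => x ≤ y ∧ y ≤ x)

end PGame

/-- Games: pre-games up to equivalence. -/
abbrev Game : Type (w + 1) := Quotient PGame.setoid.{w}

namespace Game

noncomputable instance : Zero Game.{w} := ⟨⟦0⟧⟩

noncomputable instance : Add Game.{w} := ⟨fun a b => ⟦a.out + b.out⟧⟩

noncomputable instance : Neg Game.{w} := ⟨fun a => ⟦-a.out⟧⟩

noncomputable instance : Sub Game.{w} := ⟨fun a b => ⟦a.out - b.out⟧⟩

noncomputable instance : SMul ℤ Game.{w} := ⟨zsmulRec⟩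

end Game

end SetTheory

end OldCGT

open SetTheory PGame

universe u

/-- Ordinal sum `G : H`: players may move in the base `G` (ending all play in the
subordinate) or in the subordinate `H`. -/
def ordinalSum (G : PGame.{u}) : PGame.{u} → PGame.{u}
  | ⟨yl, yr, yL, yR⟩ =>
    ⟨G.LeftMoves ⊕ yl, G.RightMoves ⊕ yr,
     Sum.elim G.moveLeft fun j => ordinalSum G (yL j),
     Sum.elim G.moveRight fun j => ordinalSum G (yR j)⟩

/-- `G ≜ H`: equivalence modulo domination.  Every Left option of `G` is `≤` some Left
option of `H`, every Left option of `H` is `≤` some Left option of `G`, every Right option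
of `G` is `≥` some Right option of `H`, and every Right option of `H` is `≥` some Right
option of `G`. -/
def EquivDom (G H : PGame) : Prop :=
  (∀ i, ∃ j, G.moveLeft i ≤ H.moveLeft j) ∧
  (∀ j, ∃ i, H.moveLeft j ≤ G.moveLeft i) ∧
  (∀ i, ∃ j, H.moveRight j ≤ G.moveRight i) ∧
  (∀ j, ∃ i, G.moveRight i ≤ H.moveRight j)

/-- The ball `⟨a | b⟩`: the game with exactly one Left option `a` and exactly one Right
option `b`. -/
def ball (a b : PGame.{u}) : PGame.{u} :=
  ⟨PUnit, PUnit, fun _ => a, fun _ => b⟩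

/-- The canonical form of a natural number: `0 ≅ ⟨ | ⟩` and `n+1 ≅ ⟨n | ⟩`. -/
def canonNat : ℕ → PGame
  | 0 => 0
  | n + 1 => ⟨PUnit, PEmpty, fun _ => canonNat n, PEmpty.elim⟩

/-- The canonical form of an integer: for `n ≥ 0` it is `canonNat n`, and the canonical
form of a negative integer is the negative of the canonical form of its absolute value. -/
def canonInt (n : ℤ) : PGame :=
  if 0 ≤ n then canonNat n.toNat else -canonNat (-n).toNat

/-- The game value of the dyadic rational `a / 2 ^ q`. -/
def dyadicVal (a : ℤ) (q : ℕ) : Game :=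
  a • (⟦powHalf q⟧ : Game)

/-!
Write `n` for the value of `G = ⟨x | y⟩` and `δ = ½^p`. As the options of `G` lie at distance `δ`
from `n`, an ordinal sum `G : K` can be compared option by option with a sum `G + W`:
`G : ⟨A | B⟩ = G + ⟨W_A | W_B⟩` whenever `G : A = G + W_A`, `G : B = G + W_B` and these `W` lie in
`[0, δ]`, and likewise `G : ⟨A | ⟩ = G + ⟨W_A | δ⟩`. Starting from `G : 0 = G` this gives
`G : m = n + δ - δ/2^m` for the canonical integers. A ball over a dyadic step `[A, B]` of width
`½^t` is its midpoint when `A` has no option closer than `½^t`, so `q` successive halvings of the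
step `[m, m + 1]` reach a form `K` of value `m + a/2^q` for any `a ≤ 2^q`, while the same halvings
of `[δ - δ/2^m, δ - δ/2^(m+1)]` give `G : K = n + δ - δ/2^m + aδ/2^(m+q+1)`. Finally, `G : H`
depends only on the value of `H`.
-/

/-! ## The order on pre-games -/

namespace SetTheory.PGame

theorem lePair_mk {xl xr yl yr : Type u} (xL : xl → PGame) (xR : xr → PGame)
    (yL : yl → PGame) (yR : yr → PGame) :
    lePair (mk xl xr xL xR) (mk yl yr yL yR) =
      ((∀ i, ¬ (lePair (xL i) (mk yl yr yL yR)).2) ∧ (∀ j, ¬ (lePair (mk xl xr xL xR) (yR j)).2),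
       (∀ i, ¬ (lePair (mk xl xr xL xR) (yL i)).1) ∧ (∀ j, ¬ (lePair (xR j) (mk yl yr yL yR)).1)) :=
  rfl

theorem lePair_swap (x y : PGame) :
    ((lePair x y).2 ↔ (lePair y x).1) ∧ ((lePair y x).2 ↔ (lePair x y).1) := by
  induction x generalizing y with
  | mk xl xr xL xR IHxl IHxr =>
  induction y with
  | mk yl yr yL yR IHyl IHyr =>
  rw [lePair_mk, lePair_mk]
  exact ⟨and_congr (forall_congr' fun i => not_congr (IHyl i).2.symm)
      (forall_congr' fun j => not_congr (IHxr j _).2.symm),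
    and_congr (forall_congr' fun i => not_congr (IHxl i _).1.symm)
      (forall_congr' fun j => not_congr (IHyr j).1.symm)⟩

abbrev LF (x y : PGame) : Prop := ¬ y ≤ x

infixl:50 " ⧏ " => LF

theorem le_iff_forall_lf {x y : PGame} :
    x ≤ y ↔ (∀ i, x.moveLeft i ⧏ y) ∧ ∀ j, x ⧏ y.moveRight j := by
  obtain ⟨xl, xr, xL, xR⟩ := x
  obtain ⟨yl, yr, yL, yR⟩ := y
  show (lePair _ _).1 ↔ _
  rw [lePair_mk]
  exact and_congr (forall_congr' fun i => not_congr (lePair_swap _ _).1)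
    (forall_congr' fun j => not_congr (lePair_swap _ _).1)

theorem le_of_forall_lf {x y : PGame} (h₁ : ∀ i, x.moveLeft i ⧏ y)
    (h₂ : ∀ j, x ⧏ y.moveRight j) : x ≤ y :=
  le_iff_forall_lf.2 ⟨h₁, h₂⟩

theorem lf_iff_exists_le {x y : PGame} :
    x ⧏ y ↔ (∃ i, x ≤ y.moveLeft i) ∨ ∃ j, x.moveRight j ≤ y := by
  rw [LF, le_iff_forall_lf]
  simp only [LF, not_and_or, not_forall, not_not]

theorem lf_of_le_moveLeft {x y : PGame} {i : y.LeftMoves} (h : x ≤ y.moveLeft i) : x ⧏ y :=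
  lf_iff_exists_le.2 (.inl ⟨i, h⟩)

theorem lf_of_moveRight_le {x y : PGame} {j : x.RightMoves} (h : x.moveRight j ≤ y) :
    x ⧏ y :=
  lf_iff_exists_le.2 (.inr ⟨j, h⟩)

protected theorem le_refl (x : PGame) : x ≤ x := by
  induction x with
  | mk l r L R IHl IHr =>
    exact le_of_forall_lf (fun i => lf_of_le_moveLeft (i := i) (IHl i))
      (fun j => lf_of_moveRight_le (j := j) (IHr j))

/-- The three rotations of transitivity must be proved together: each one's induction step
calls another at smaller games. -/
theorem le_trans_rotations (x y z : PGame) :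
    (x ≤ y → y ≤ z → x ≤ z) ∧ (y ≤ z → z ≤ x → y ≤ x) ∧ (z ≤ x → x ≤ y → z ≤ y) := by
  induction x generalizing y z with
  | mk xl xr xL xR IHxl IHxr =>
  induction y generalizing z with
  | mk yl yr yL yR IHyl IHyr =>
  induction z with
  | mk zl zr zL zR IHzl IHzr =>
  refine ⟨fun hxy hyz => ?_, fun hyz hzx => ?_, fun hzx hxy => ?_⟩
  · exact le_of_forall_lf (fun i h => (le_iff_forall_lf.1 hxy).1 i ((IHxl i _ _).2.1 hyz h))
      fun j h => (le_iff_forall_lf.1 hyz).2 j ((IHzr j).2.2 h hxy)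
  · exact le_of_forall_lf (fun i h => (le_iff_forall_lf.1 hyz).1 i ((IHyl i _).2.2 hzx h))
      fun j h => (le_iff_forall_lf.1 hzx).2 j ((IHxr j _ _).1 h hyz)
  · exact le_of_forall_lf (fun i h => (le_iff_forall_lf.1 hzx).1 i ((IHzl i).1 hxy h))
      fun j h => (le_iff_forall_lf.1 hxy).2 j ((IHyr j _).2.1 h hzx)

instance : Preorder PGame where
  le_refl := PGame.le_refl
  le_trans x y z := (le_trans_rotations x y z).1
  lt_iff_le_not_ge _ _ := Iff.rfl

theorem mk_eq_mk_iff {x y : PGame} : (⟦x⟧ : Game) = ⟦y⟧ ↔ x ≤ y ∧ y ≤ x := by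
  refine ⟨fun h => ?_, fun h => Quotient.sound (.rel _ _ h)⟩
  replace h := Quotient.exact h
  induction h with
  | rel _ _ h => exact h
  | refl x => exact ⟨le_rfl, le_rfl⟩
  | symm _ _ _ ih => exact ih.symm
  | trans _ _ _ _ _ ih₁ ih₂ => exact ⟨ih₁.1.trans ih₂.1, ih₂.2.trans ih₁.2⟩

theorem mk_eq_mk {x y : PGame} (h₁ : x ≤ y) (h₂ : y ≤ x) : (⟦x⟧ : Game) = ⟦y⟧ :=
  mk_eq_mk_iff.2 ⟨h₁, h₂⟩

theorem mk_le_mk {x y : PGame} : (⟦x⟧ : Game) ≤ ⟦y⟧ ↔ x ≤ y := by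
  refine ⟨fun h => ?_, fun h => .single (.inl h)⟩
  replace h := Quotient.le_def.1 h
  induction h with
  | single h => exact h.elim id fun h => (mk_eq_mk_iff.1 (Quotient.sound h)).1
  | tail _ h ih => exact ih.trans (h.elim id fun h => (mk_eq_mk_iff.1 (Quotient.sound h)).1)

theorem lf_iff_not_mk_le {x y : PGame} : x ⧏ y ↔ ¬ (⟦y⟧ : Game) ≤ ⟦x⟧ :=
  not_congr mk_le_mk.symm

theorem _root_.EquivDom.mk_eq {G H : PGame} (h : EquivDom G H) : (⟦G⟧ : Game) = ⟦H⟧ := by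
  obtain ⟨hl₁, hl₂, hr₁, hr₂⟩ := h
  refine mk_eq_mk (le_of_forall_lf ?_ ?_) (le_of_forall_lf ?_ ?_)
  · exact fun i => (hl₁ i).elim fun j hj => lf_of_le_moveLeft hj
  · exact fun j => (hr₂ j).elim fun i hi => lf_of_moveRight_le hi
  · exact fun j => (hl₂ j).elim fun i hi => lf_of_le_moveLeft hi
  · exact fun i => (hr₁ i).elim fun j hj => lf_of_moveRight_le hj

/-! ## Sums, and games as an ordered group -/

theorem mk_eq_of_forall {x y : PGame}
    (hl₁ : ∀ i, ∃ j, (⟦x.moveLeft i⟧ : Game) = ⟦y.moveLeft j⟧)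
    (hl₂ : ∀ j, ∃ i, (⟦x.moveLeft i⟧ : Game) = ⟦y.moveLeft j⟧)
    (hr₁ : ∀ i, ∃ j, (⟦x.moveRight i⟧ : Game) = ⟦y.moveRight j⟧)
    (hr₂ : ∀ j, ∃ i, (⟦x.moveRight i⟧ : Game) = ⟦y.moveRight j⟧) :
    (⟦x⟧ : Game) = ⟦y⟧ := by
  refine EquivDom.mk_eq ⟨fun i => ?_, fun j => ?_, fun i => ?_, fun j => ?_⟩
  · obtain ⟨j, h⟩ := hl₁ i; exact ⟨j, (mk_eq_mk_iff.1 h).1⟩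
  · obtain ⟨i, h⟩ := hl₂ j; exact ⟨i, (mk_eq_mk_iff.1 h).2⟩
  · obtain ⟨j, h⟩ := hr₁ i; exact ⟨j, (mk_eq_mk_iff.1 h).2⟩
  · obtain ⟨i, h⟩ := hr₂ j; exact ⟨i, (mk_eq_mk_iff.1 h).1⟩

theorem add_le_add_left_and_lf (x y z : PGame) :
    (x ≤ y → x + z ≤ y + z) ∧ (x ⧏ y → x + z ⧏ y + z) := by
  induction x generalizing y z with
  | mk xl xr xL xR IHxl IHxr =>
  induction y generalizing z with
  | mk yl yr yL yR IHyl IHyr =>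
  induction z with
  | mk zl zr zL zR IHzl IHzr =>
  refine ⟨fun h => ?_, fun h => ?_⟩
  · obtain ⟨hl, hr⟩ := le_iff_forall_lf.1 h
    refine le_of_forall_lf ?_ ?_
    · rintro (i | k)
      · exact (IHxl i _ _).2 (hl i)
      · exact lf_of_le_moveLeft (i := Sum.inr k) ((IHzl k).1 h)
    · rintro (j | k)
      · exact (IHyr j _).2 (hr j)
      · exact lf_of_moveRight_le (j := Sum.inr k) ((IHzr k).1 h)
  · rcases lf_iff_exists_le.1 h with ⟨i, hi⟩ | ⟨j, hj⟩
    · exact lf_of_le_moveLeft (i := Sum.inl i) ((IHyl i _).1 hi)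
    · exact lf_of_moveRight_le (j := Sum.inl j) ((IHxr j _ _).1 hj)

protected theorem add_le_add_left {x y : PGame} (h : x ≤ y) (z : PGame) : x + z ≤ y + z :=
  (add_le_add_left_and_lf x y z).1 h

theorem add_comm_le (x y : PGame) : x + y ≤ y + x := by
  induction x generalizing y with
  | mk xl xr xL xR IHxl IHxr =>
  induction y with
  | mk yl yr yL yR IHyl IHyr =>
  refine le_of_forall_lf ?_ ?_
  · rintro (i | j)
    · exact lf_of_le_moveLeft (i := Sum.inr i) (IHxl i _)
    · exact lf_of_le_moveLeft (i := Sum.inl j) (IHyl j)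
  · rintro (j | i)
    · exact lf_of_moveRight_le (j := Sum.inr j) (IHyr j)
    · exact lf_of_moveRight_le (j := Sum.inl i) (IHxr i _)

protected theorem add_le_add_right {x y : PGame} (h : x ≤ y) (z : PGame) : z + x ≤ z + y :=
  (add_comm_le z x).trans ((PGame.add_le_add_left h z).trans (add_comm_le y z))

theorem mk_add_congr {x x' y y' : PGame} (hx : (⟦x⟧ : Game) = ⟦x'⟧)
    (hy : (⟦y⟧ : Game) = ⟦y'⟧) : (⟦x + y⟧ : Game) = ⟦x' + y'⟧ := by
  rw [mk_eq_mk_iff] at hx hy ⊢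
  exact ⟨(PGame.add_le_add_left hx.1 y).trans (PGame.add_le_add_right hy.1 x'),
    (PGame.add_le_add_left hx.2 y').trans (PGame.add_le_add_right hy.2 x)⟩

theorem mk_add_zero (x : PGame) : (⟦x + 0⟧ : Game) = ⟦x⟧ := by
  induction x with
  | mk xl xr xL xR IHxl IHxr =>
  refine mk_eq_of_forall ?_ (fun i => ⟨Sum.inl i, IHxl i⟩) ?_ (fun j => ⟨Sum.inl j, IHxr j⟩)
  · rintro (i | ⟨⟨⟩⟩)
    exact ⟨i, IHxl i⟩
  · rintro (j | ⟨⟨⟩⟩)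
    exact ⟨j, IHxr j⟩

theorem mk_add_assoc (x y z : PGame) : (⟦x + y + z⟧ : Game) = ⟦x + (y + z)⟧ := by
  induction x generalizing y z with
  | mk xl xr xL xR IHxl IHxr =>
  induction y generalizing z with
  | mk yl yr yL yR IHyl IHyr =>
  induction z with
  | mk zl zr zL zR IHzl IHzr =>
  refine mk_eq_of_forall ?_ ?_ ?_ ?_
  · rintro ((i | j) | k)
    exacts [⟨.inl i, IHxl i _ _⟩, ⟨.inr (.inl j), IHyl j _⟩, ⟨.inr (.inr k), IHzl k⟩]
  · rintro (i | j | k)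
    exacts [⟨.inl (.inl i), IHxl i _ _⟩, ⟨.inl (.inr j), IHyl j _⟩, ⟨.inr k, IHzl k⟩]
  · rintro ((i | j) | k)
    exacts [⟨.inl i, IHxr i _ _⟩, ⟨.inr (.inl j), IHyr j _⟩, ⟨.inr (.inr k), IHzr k⟩]
  · rintro (i | j | k)
    exacts [⟨.inl (.inl i), IHxr i _ _⟩, ⟨.inl (.inr j), IHyr j _⟩, ⟨.inr k, IHzr k⟩]

theorem neg_le_neg_and_lf (x y : PGame) : (x ≤ y → -y ≤ -x) ∧ (x ⧏ y → -y ⧏ -x) := by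
  induction x generalizing y with
  | mk xl xr xL xR IHxl IHxr =>
  induction y with
  | mk yl yr yL yR IHyl IHyr =>
  refine ⟨fun h => ?_, fun h => ?_⟩
  · obtain ⟨hl, hr⟩ := le_iff_forall_lf.1 h
    exact le_of_forall_lf (fun j => (IHyr j).2 (hr j)) (fun i => (IHxl i _).2 (hl i))
  · rcases lf_iff_exists_le.1 h with ⟨i, hi⟩ | ⟨j, hj⟩
    · exact lf_of_moveRight_le (x := -mk yl yr yL yR) (j := i) ((IHyl i).1 hi)
    · exact lf_of_le_moveLeft (y := -mk xl xr xL xR) (i := j) ((IHxr j _).1 hj)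

theorem mk_neg_congr {x y : PGame} (h : (⟦x⟧ : Game) = ⟦y⟧) :
    (⟦-x⟧ : Game) = ⟦-y⟧ := by
  rw [mk_eq_mk_iff] at h ⊢
  exact ⟨(neg_le_neg_and_lf y x).1 h.2, (neg_le_neg_and_lf x y).1 h.1⟩

theorem lf_of_moveRight_add_le {x y z : PGame} (j : x.RightMoves)
    (h : x.moveRight j + y ≤ z) : x + y ⧏ z := by
  obtain ⟨⟩ := x; obtain ⟨⟩ := y; exact lf_of_moveRight_le (j := Sum.inl j) h

theorem lf_of_add_moveRight_le {x y z : PGame} (j : y.RightMoves)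
    (h : x + y.moveRight j ≤ z) : x + y ⧏ z := by
  obtain ⟨⟩ := x; obtain ⟨⟩ := y; exact lf_of_moveRight_le (j := Sum.inr j) h

theorem lf_of_le_moveLeft_add {x y z : PGame} (i : x.LeftMoves)
    (h : z ≤ x.moveLeft i + y) : z ⧏ x + y := by
  obtain ⟨⟩ := x; obtain ⟨⟩ := y; exact lf_of_le_moveLeft (i := Sum.inl i) h

theorem lf_of_le_add_moveLeft {x y z : PGame} (i : y.LeftMoves)
    (h : z ≤ x + y.moveLeft i) : z ⧏ x + y := by
  obtain ⟨⟩ := x; obtain ⟨⟩ := y; exact lf_of_le_moveLeft (i := Sum.inr i) h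

theorem add_le_of_forall {x y z : PGame} (h₁ : ∀ i, x.moveLeft i + y ⧏ z)
    (h₂ : ∀ i, x + y.moveLeft i ⧏ z) (h₃ : ∀ j, x + y ⧏ z.moveRight j) : x + y ≤ z := by
  obtain ⟨⟩ := x; obtain ⟨⟩ := y
  exact le_of_forall_lf (by rintro (i | i); exacts [h₁ i, h₂ i]) h₃

theorem le_add_of_forall {x y z : PGame} (h₁ : ∀ i, z.moveLeft i ⧏ x + y)
    (h₂ : ∀ j, z ⧏ x.moveRight j + y) (h₃ : ∀ j, z ⧏ x + y.moveRight j) : z ≤ x + y := by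
  obtain ⟨⟩ := x; obtain ⟨⟩ := y
  exact le_of_forall_lf h₁ (by rintro (j | j); exacts [h₂ j, h₃ j])

theorem mk_add_neg_self (x : PGame) : (⟦x + -x⟧ : Game) = ⟦0⟧ := by
  induction x with
  | mk xl xr xL xR IHxl IHxr =>
  refine mk_eq_mk (le_of_forall_lf ?_ nofun) (le_of_forall_lf nofun ?_)
  · rintro (i | j)
    · exact lf_of_add_moveRight_le (y := -mk xl xr xL xR) i (mk_eq_mk_iff.1 (IHxl i)).1
    · exact lf_of_moveRight_add_le (x := mk xl xr xL xR) j (mk_eq_mk_iff.1 (IHxr j)).1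
  · rintro (j | i)
    · exact lf_of_le_add_moveLeft (y := -mk xl xr xL xR) j (mk_eq_mk_iff.1 (IHxr j)).2
    · exact lf_of_le_moveLeft_add (x := mk xl xr xL xR) i (mk_eq_mk_iff.1 (IHxl i)).2

theorem mk_zero : (⟦0⟧ : Game) = 0 :=
  rfl

theorem mk_add (x y : PGame) : (⟦x + y⟧ : Game) = ⟦x⟧ + ⟦y⟧ :=
  mk_add_congr (Quotient.out_eq _).symm (Quotient.out_eq _).symm

theorem mk_neg (x : PGame) : (⟦-x⟧ : Game) = -⟦x⟧ :=
  mk_neg_congr (Quotient.out_eq _).symm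

theorem mk_sub (x y : PGame) : (⟦x - y⟧ : Game) = ⟦x⟧ - ⟦y⟧ :=
  mk_add_congr (Quotient.out_eq _).symm (mk_neg_congr (Quotient.out_eq _).symm)

end SetTheory.PGame

namespace SetTheory.Game

instance : AddCommGroup Game where
  add_assoc a b c := Quotient.inductionOn₃ a b c fun x y z => by
    simp only [← mk_add]; exact mk_add_assoc x y z
  zero_add a := Quotient.inductionOn a fun x => by
    show ⟦0⟧ + ⟦x⟧ = ⟦x⟧
    rw [← mk_add, mk_eq_mk (add_comm_le 0 x) (add_comm_le x 0)]; exact mk_add_zero x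
  add_zero a := Quotient.inductionOn a fun x => by
    show ⟦x⟧ + ⟦0⟧ = ⟦x⟧
    rw [← mk_add]; exact mk_add_zero x
  nsmul := nsmulRec
  sub_eq_add_neg a b := Quotient.inductionOn₂ a b fun x y => by
    rw [← mk_sub, ← mk_neg, ← mk_add]; rfl
  neg_add_cancel a := Quotient.inductionOn a fun x => by
    rw [← mk_neg, ← mk_add, mk_eq_mk (add_comm_le _ _) (add_comm_le _ _)]
    exact mk_add_neg_self x
  add_comm a b := Quotient.inductionOn₂ a b fun x y => by
    simp only [← mk_add]; exact mk_eq_mk (add_comm_le x y) (add_comm_le y x)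

instance : PartialOrder Game where
  le_antisymm a b := Quotient.inductionOn₂ a b fun _ _ h₁ h₂ =>
    mk_eq_mk (mk_le_mk.1 h₁) (mk_le_mk.1 h₂)

instance : IsOrderedAddMonoid Game where
  add_le_add_left a b h c := by
    induction a using Quotient.inductionOn
    induction b using Quotient.inductionOn
    induction c using Quotient.inductionOn
    rw [← mk_add, ← mk_add]
    exact mk_le_mk.2 (PGame.add_le_add_left (mk_le_mk.1 h) _)

end SetTheory.Game

/-! ## Powers of one half -/

notation "½^" n:max => (⟦powHalf n⟧ : Game)

namespace SetTheory.PGame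

theorem le_add_of_mk_nonneg (x : PGame) {w : PGame} (h : 0 ≤ (⟦w⟧ : Game)) :
    x ≤ x + w :=
  mk_le_mk.1 (by rw [mk_add]; exact le_add_of_nonneg_right h)

theorem zero_lf_powHalf : ∀ n, (0 : PGame) ⧏ powHalf n
  | 0 => lf_of_le_moveLeft (y := powHalf 0) (i := PUnit.unit) le_rfl
  | n + 1 => lf_of_le_moveLeft (y := powHalf (n + 1)) (i := PUnit.unit) le_rfl

theorem zero_le_powHalf : ∀ n, (0 : PGame) ≤ powHalf n
  | 0 => le_of_forall_lf nofun nofun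
  | n + 1 => le_of_forall_lf nofun fun _ => zero_lf_powHalf n

theorem powHalf_succ_le_powHalf : ∀ n, powHalf (n + 1) ≤ powHalf n
  | 0 => le_of_forall_lf (fun _ => zero_lf_powHalf 0) nofun
  | n + 1 => le_of_forall_lf (fun _ => zero_lf_powHalf (n + 1))
      fun _ => lf_of_moveRight_le (x := powHalf (n + 2)) (j := PUnit.unit)
        (powHalf_succ_le_powHalf n)

theorem mk_powHalf_pos (n : ℕ) : (0 : Game) < ½^n :=
  ⟨mk_le_mk.2 (zero_le_powHalf n), lf_iff_not_mk_le.1 (zero_lf_powHalf n)⟩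

theorem mk_powHalf_succ_lt (n : ℕ) : (½^(n + 1) : Game) < ½^n :=
  ⟨mk_le_mk.2 (powHalf_succ_le_powHalf n),
    lf_iff_not_mk_le.1 (lf_of_moveRight_le (x := powHalf (n + 1)) (j := PUnit.unit) le_rfl)⟩

theorem powHalf_moveLeft (n : ℕ) (i : (powHalf n).LeftMoves) : (powHalf n).moveLeft i = 0 := by
  cases n <;> rfl

theorem powHalf_succ_moveRight (n : ℕ) (j : (powHalf (n + 1)).RightMoves) :
    (powHalf (n + 1)).moveRight j = powHalf n :=
  rfl

theorem powHalf_le_powHalf_succ_add (n : ℕ) :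
    powHalf n ≤ powHalf (n + 1) + powHalf (n + 1) := by
  have hpos := mk_powHalf_pos (n + 1)
  refine le_add_of_forall (fun i => ?_) (fun _ => ?_) (fun _ => ?_) <;>
    rw [lf_iff_not_mk_le, mk_add] <;> refine LT.lt.not_ge ?_
  · rw [powHalf_moveLeft, mk_zero]
    exact add_pos hpos hpos
  · rw [powHalf_succ_moveRight]
    exact lt_add_of_pos_right _ hpos
  · rw [powHalf_succ_moveRight]
    exact lt_add_of_pos_left _ hpos

theorem powHalf_succ_add_le (n : ℕ) : powHalf (n + 1) + powHalf (n + 1) ≤ powHalf n := by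
  have hL (n : ℕ) (i) : (powHalf (n + 1)).moveLeft i + powHalf (n + 1) ⧏ powHalf n := by
    rw [lf_iff_not_mk_le, mk_add, powHalf_moveLeft, mk_zero, zero_add]
    exact (mk_powHalf_succ_lt n).not_ge
  have hR (n : ℕ) (i) : powHalf (n + 1) + (powHalf (n + 1)).moveLeft i ⧏ powHalf n := by
    rw [lf_iff_not_mk_le, mk_add, powHalf_moveLeft, mk_zero, add_zero]
    exact (mk_powHalf_succ_lt n).not_ge
  induction n with
  | zero => exact add_le_of_forall (hL 0) (hR 0) nofun
  | succ n ih =>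
    refine add_le_of_forall (hL _) (hR _) fun _ =>
      lf_of_moveRight_add_le (x := powHalf (n + 2)) PUnit.unit (mk_le_mk.1 ?_)
    show ⟦powHalf (n + 1) + powHalf (n + 2)⟧ ≤ ½^n
    rw [mk_add]
    calc ½^(n + 1) + ½^(n + 2) ≤ ½^(n + 1) + ½^(n + 1) :=
          add_le_add_right (mk_powHalf_succ_lt (n + 1)).le _
      _ ≤ ½^n := by rw [← mk_add]; exact mk_le_mk.2 ih

theorem mk_powHalf_succ_add (n : ℕ) : (½^(n + 1) : Game) + ½^(n + 1) = ½^n := by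
  rw [← mk_add]
  exact mk_eq_mk (powHalf_succ_add_le n) (powHalf_le_powHalf_succ_add n)

theorem mk_powHalf_antitone : Antitone fun n => (½^n : Game) :=
  antitone_nat_of_succ_le fun n => (mk_powHalf_succ_lt n).le

theorem two_pow_nsmul_mk_powHalf (k n : ℕ) : 2 ^ k • (½^(n + k) : Game) = ½^n := by
  induction k with
  | zero => simp
  | succ k ih =>
    rw [pow_succ, mul_nsmul, two_nsmul, ← nsmul_add, ← add_assoc, mk_powHalf_succ_add, ih]

theorem add_mk_powHalf_add_nsmul (X : Game) {a q : ℕ} (h : 2 ^ q ≤ a) (t : ℕ) :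
    X + ½^(t + 1) + (a - 2 ^ q) • ½^(t + 1 + q) = X + a • ½^(t + (q + 1)) := by
  rw [← two_pow_nsmul_mk_powHalf q (t + 1), add_assoc, ← add_nsmul, Nat.add_sub_cancel' h,
    Nat.add_right_comm, add_assoc]

end SetTheory.PGame

/-! ## Balls over dyadic steps -/

def OptionsApart (G : PGame) (t : ℕ) : Prop :=
  (∀ i, (⟦G.moveLeft i⟧ : Game) + ½^t ≤ ⟦G⟧) ∧ ∀ j, ⟦G⟧ + ½^t ≤ (⟦G.moveRight j⟧ : Game)

theorem OptionsApart.succ {G : PGame} {t : ℕ} (h : OptionsApart G t) :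
    OptionsApart G (t + 1) :=
  ⟨fun i => (add_le_add_right (mk_powHalf_succ_lt t).le _).trans (h.1 i),
    fun j => (add_le_add_right (mk_powHalf_succ_lt t).le _).trans (h.2 j)⟩

theorem OptionsApart.mk_moveLeft_add_le {G W WA : PGame} {p : ℕ} (hG : OptionsApart G p)
    (i : G.LeftMoves) (hW : (⟦W⟧ : Game) ≤ ⟦WA⟧ + ½^p) :
    (⟦G.moveLeft i⟧ : Game) + ⟦W⟧ ≤ ⟦G⟧ + ⟦WA⟧ :=
  calc ⟦G.moveLeft i⟧ + ⟦W⟧ ≤ ⟦G.moveLeft i⟧ + (⟦WA⟧ + ½^p) := add_le_add_right hW _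
    _ = ⟦G.moveLeft i⟧ + ½^p + ⟦WA⟧ := by abel
    _ ≤ ⟦G⟧ + ⟦WA⟧ := add_le_add_left (hG.1 i) _

def IsStep (A B : PGame) (t : ℕ) : Prop :=
  OptionsApart A t ∧ (⟦B⟧ : Game) = ⟦A⟧ + ½^t

namespace IsStep

variable {A B : PGame} {t : ℕ}

theorem mk_ball (h : IsStep A B t) : (⟦ball A B⟧ : Game) = ⟦A⟧ + ½^(t + 1) := by
  rw [← mk_add]
  obtain ⟨hA₀, hA₀'⟩ := mk_eq_mk_iff.1 (mk_add_zero A)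
  obtain ⟨hB₁, hB₂⟩ := mk_eq_mk_iff.1 ((mk_add A (powHalf t)).trans h.2.symm)
  refine mk_eq_mk (le_add_of_forall (fun _ => ?_) (fun j => ?_) fun _ => ?_)
    (add_le_of_forall (fun i => ?_) (fun _ => ?_) fun _ => ?_)
  · exact lf_of_le_add_moveLeft (y := powHalf (t + 1)) PUnit.unit hA₀'
  · refine lf_of_moveRight_le (j := PUnit.unit) (mk_le_mk.1 ?_)
    show ⟦B⟧ ≤ ⟦A.moveRight j + powHalf (t + 1)⟧
    rw [h.2, mk_add]
    exact (h.1.2 j).trans (le_add_of_nonneg_right (mk_powHalf_pos _).le)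
  · exact lf_of_moveRight_le (j := PUnit.unit) hB₂
  · refine lf_of_le_moveLeft (i := PUnit.unit) (mk_le_mk.1 ?_)
    show ⟦A.moveLeft i + powHalf (t + 1)⟧ ≤ ⟦A⟧
    rw [mk_add]
    exact (add_le_add_right (mk_powHalf_succ_lt t).le _).trans (h.1.1 i)
  · exact lf_of_le_moveLeft (i := PUnit.unit) hA₀
  · exact lf_of_add_moveRight_le (y := powHalf (t + 1)) PUnit.unit hB₁

theorem le_mk_ball (h : IsStep A B t) : (⟦A⟧ : Game) ≤ ⟦ball A B⟧ := by
  rw [h.mk_ball]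
  exact le_add_of_nonneg_right (mk_powHalf_pos _).le

theorem mk_ball_le (h : IsStep A B t) : (⟦ball A B⟧ : Game) ≤ ⟦B⟧ := by
  rw [h.mk_ball, h.2]
  exact add_le_add_right (mk_powHalf_succ_lt t).le _

theorem optionsApart_ball (h : IsStep A B t) : OptionsApart (ball A B) (t + 1) := by
  refine ⟨fun _ => ?_, fun _ => ?_⟩
  · show ⟦A⟧ + ½^(t + 1) ≤ ⟦ball A B⟧
    rw [h.mk_ball]
  · show ⟦ball A B⟧ + ½^(t + 1) ≤ ⟦B⟧
    rw [h.mk_ball, h.2, add_assoc, mk_powHalf_succ_add]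

theorem lower (h : IsStep A B t) : IsStep A (ball A B) (t + 1) :=
  ⟨h.1.succ, h.mk_ball⟩

theorem upper (h : IsStep A B t) : IsStep (ball A B) B (t + 1) :=
  ⟨h.optionsApart_ball, by rw [h.mk_ball, h.2, add_assoc, mk_powHalf_succ_add]⟩

end IsStep

/-! ## Ordinal sums -/

theorem ordinalSum_le_and_lf (G H₁ H₂ : PGame) :
    (H₁ ≤ H₂ → ordinalSum G H₁ ≤ ordinalSum G H₂) ∧
      (H₁ ⧏ H₂ → ordinalSum G H₁ ⧏ ordinalSum G H₂) := by
  induction H₁ generalizing H₂ with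
  | mk xl xr xL xR IHxl IHxr =>
  induction H₂ with
  | mk yl yr yL yR IHyl IHyr =>
  refine ⟨fun h => ?_, fun h => ?_⟩
  · obtain ⟨hl, hr⟩ := le_iff_forall_lf.1 h
    refine le_of_forall_lf ?_ ?_
    · rintro (i | i)
      · exact lf_of_le_moveLeft (i := Sum.inl i) le_rfl
      · exact (IHxl i _).2 (hl i)
    · rintro (j | j)
      · exact lf_of_moveRight_le (j := Sum.inl j) le_rfl
      · exact (IHyr j).2 (hr j)
  · rcases lf_iff_exists_le.1 h with ⟨i, hi⟩ | ⟨j, hj⟩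
    · exact lf_of_le_moveLeft (i := Sum.inr i) ((IHyl i).1 hi)
    · exact lf_of_moveRight_le (j := Sum.inr j) ((IHxr j _).1 hj)

theorem mk_ordinalSum_congr (G : PGame) {H₁ H₂ : PGame}
    (h : (⟦H₁⟧ : Game) = ⟦H₂⟧) : (⟦ordinalSum G H₁⟧ : Game) = ⟦ordinalSum G H₂⟧ := by
  rw [mk_eq_mk_iff] at h ⊢
  exact ⟨(ordinalSum_le_and_lf G H₁ H₂).1 h.1, (ordinalSum_le_and_lf G H₂ H₁).1 h.2⟩

theorem mk_ordinalSum_zero (G : PGame) : (⟦ordinalSum G 0⟧ : Game) = ⟦G⟧ := by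
  obtain ⟨⟩ := G
  refine EquivDom.mk_eq ⟨?_, fun i => ⟨Sum.inl i, le_rfl⟩, ?_, fun j => ⟨Sum.inl j, le_rfl⟩⟩
  · rintro (i | ⟨⟨⟩⟩); exact ⟨i, le_rfl⟩
  · rintro (j | ⟨⟨⟩⟩); exact ⟨j, le_rfl⟩

section OrdinalSum

variable {G A WA : PGame} {p : ℕ}

theorem mk_ordinalSum_ball {B WB : PGame} (hG : OptionsApart G p)
    (hA : (⟦ordinalSum G A⟧ : Game) = ⟦G⟧ + ⟦WA⟧)
    (hB : (⟦ordinalSum G B⟧ : Game) = ⟦G⟧ + ⟦WB⟧)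
    (h₀ : 0 ≤ (⟦ball WA WB⟧ : Game)) (h₁ : (⟦ball WA WB⟧ : Game) ≤ ⟦WA⟧ + ½^p)
    (h₂ : (⟦WB⟧ : Game) ≤ ½^p) :
    (⟦ordinalSum G (ball A B)⟧ : Game) = ⟦G⟧ + ⟦ball WA WB⟧ := by
  rw [← mk_add]
  obtain ⟨hA₁, hA₂⟩ := mk_eq_mk_iff.1 ((mk_add G WA).trans hA.symm)
  obtain ⟨hB₁, hB₂⟩ := mk_eq_mk_iff.1 ((mk_add G WB).trans hB.symm)
  refine mk_eq_mk (le_add_of_forall ?_ (fun j => ?_) fun _ => ?_)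
    (add_le_of_forall (fun i => ?_) (fun _ => ?_) ?_)
  · rintro (i | _)
    · exact lf_of_le_moveLeft_add i (le_add_of_mk_nonneg _ h₀)
    · exact lf_of_le_add_moveLeft (y := ball WA WB) PUnit.unit hA₂
  · exact lf_of_moveRight_le (j := Sum.inl j) (le_add_of_mk_nonneg _ h₀)
  · exact lf_of_moveRight_le (j := Sum.inr PUnit.unit) hB₂
  · refine lf_of_le_moveLeft (i := Sum.inr PUnit.unit) (mk_le_mk.1 ?_)
    show ⟦G.moveLeft i + ball WA WB⟧ ≤ ⟦ordinalSum G A⟧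
    rw [mk_add, hA]
    exact hG.mk_moveLeft_add_le i h₁
  · exact lf_of_le_moveLeft (i := Sum.inr PUnit.unit) hA₁
  · rintro (j | _)
    · refine lf_of_add_moveRight_le (y := ball WA WB) PUnit.unit (mk_le_mk.1 ?_)
      show ⟦G + WB⟧ ≤ ⟦G.moveRight j⟧
      rw [mk_add]
      exact (add_le_add_right h₂ _).trans (hG.2 j)
    · exact lf_of_add_moveRight_le (y := ball WA WB) PUnit.unit hB₁

theorem mk_ordinalSum_leftOnly (hG : OptionsApart G p) (j₀ : G.RightMoves)
    (hj₀ : (⟦G.moveRight j₀⟧ : Game) ≤ ⟦G⟧ + ½^p)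
    (hA : (⟦ordinalSum G A⟧ : Game) = ⟦G⟧ + ⟦WA⟧)
    (h₀ : 0 ≤ (⟦ball WA (powHalf p)⟧ : Game))
    (h₁ : (⟦ball WA (powHalf p)⟧ : Game) ≤ ⟦WA⟧ + ½^p) :
    (⟦ordinalSum G (mk PUnit PEmpty (fun _ => A) PEmpty.elim)⟧ : Game) =
      ⟦G⟧ + ⟦ball WA (powHalf p)⟧ := by
  -- `⟨A | ⟩` has no Right option to match the Right option `G + ½^p` of `G + ⟨WA | ½^p⟩`;
  -- the Right option `G.moveRight j₀` of `G` matches it instead.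
  rw [← mk_add]
  obtain ⟨hA₁, hA₂⟩ := mk_eq_mk_iff.1 ((mk_add G WA).trans hA.symm)
  refine mk_eq_mk (le_add_of_forall ?_ (fun j => ?_) fun _ => ?_)
    (add_le_of_forall (fun i => ?_) (fun _ => ?_) ?_)
  · rintro (i | _)
    · exact lf_of_le_moveLeft_add i (le_add_of_mk_nonneg _ h₀)
    · exact lf_of_le_add_moveLeft (y := ball WA (powHalf p)) PUnit.unit hA₂
  · exact lf_of_moveRight_le (j := Sum.inl j) (le_add_of_mk_nonneg _ h₀)
  · refine lf_of_moveRight_le (j := Sum.inl j₀) (mk_le_mk.1 ?_)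
    show ⟦G.moveRight j₀⟧ ≤ ⟦G + powHalf p⟧
    rwa [mk_add]
  · refine lf_of_le_moveLeft (i := Sum.inr PUnit.unit) (mk_le_mk.1 ?_)
    show ⟦G.moveLeft i + ball WA (powHalf p)⟧ ≤ ⟦ordinalSum G A⟧
    rw [mk_add, hA]
    exact hG.mk_moveLeft_add_le i h₁
  · exact lf_of_le_moveLeft (i := Sum.inr PUnit.unit) hA₁
  · rintro (j | j)
    · refine lf_of_add_moveRight_le (y := ball WA (powHalf p)) PUnit.unit (mk_le_mk.1 ?_)
      show ⟦G + powHalf p⟧ ≤ ⟦G.moveRight j⟧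
      rw [mk_add]
      exact hG.2 j
    · exact j.elim

end OrdinalSum

/-! ## Integers and binary subdivision -/

theorem mk_leftOnly_eq_add_one {U : PGame} (hU : OptionsApart U 0)
    (hR : IsEmpty U.RightMoves) :
    (⟦mk PUnit PEmpty (fun _ => U) PEmpty.elim⟧ : Game) = ⟦U⟧ + ½^0 := by
  rw [← mk_add]
  obtain ⟨hU₀, hU₀'⟩ := mk_eq_mk_iff.1 (mk_add_zero U)
  refine mk_eq_mk (le_add_of_forall (fun _ => ?_) hR.elim nofun)
    (add_le_of_forall (fun i => ?_) (fun _ => ?_) nofun)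
  · exact lf_of_le_add_moveLeft (y := powHalf 0) PUnit.unit hU₀'
  · refine lf_of_le_moveLeft (i := PUnit.unit) (mk_le_mk.1 ?_)
    show ⟦U.moveLeft i + powHalf 0⟧ ≤ ⟦U⟧
    rw [mk_add]
    exact hU.1 i
  · exact lf_of_le_moveLeft (i := PUnit.unit) hU₀

theorem isStep_canonNat (m : ℕ) : IsStep (canonNat m) (canonNat (m + 1)) 0 := by
  have hR (m : ℕ) : IsEmpty (canonNat m).RightMoves := by cases m <;> exact ⟨nofun⟩
  induction m with
  | zero =>
    have h : OptionsApart (canonNat 0) 0 := ⟨nofun, nofun⟩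
    exact ⟨h, mk_leftOnly_eq_add_one h (hR 0)⟩
  | succ m ih =>
    have h : OptionsApart (canonNat (m + 1)) 0 := ⟨fun _ => ih.2.ge, (hR _).elim⟩
    exact ⟨h, mk_leftOnly_eq_add_one h (hR _)⟩

theorem mk_canonNat (m : ℕ) : (⟦canonNat m⟧ : Game) = m • ½^0 := by
  induction m with
  | zero => exact (zero_nsmul _).symm
  | succ m ih => rw [(isStep_canonNat m).2, ih, succ_nsmul]

def natImage (p : ℕ) : ℕ → PGame
  | 0 => 0
  | m + 1 => ball (natImage p m) (powHalf p)

theorem isStep_natImage (p m : ℕ) : IsStep (natImage p m) (powHalf p) (p + m) := by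
  induction m with
  | zero => exact ⟨⟨nofun, nofun⟩, by rw [natImage, mk_zero, zero_add, add_zero]⟩
  | succ m ih => exact ih.upper

theorem mk_natImage (p m : ℕ) : (⟦natImage p m⟧ : Game) = ½^p - ½^(p + m) :=
  eq_sub_of_add_eq (isStep_natImage p m).2.symm

theorem mk_natImage_nonneg (p m : ℕ) : 0 ≤ (⟦natImage p m⟧ : Game) := by
  rw [mk_natImage, sub_nonneg]
  exact mk_powHalf_antitone (Nat.le_add_right p m)

theorem mk_natImage_le (p m : ℕ) : (⟦natImage p m⟧ : Game) ≤ ½^p := by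
  rw [mk_natImage]
  exact sub_le_self _ (mk_powHalf_pos _).le

theorem mk_ordinalSum_canonNat {G : PGame} {p : ℕ} (hG : OptionsApart G p)
    (j₀ : G.RightMoves) (hj₀ : (⟦G.moveRight j₀⟧ : Game) ≤ ⟦G⟧ + ½^p) (m : ℕ) :
    (⟦ordinalSum G (canonNat m)⟧ : Game) = ⟦G⟧ + ⟦natImage p m⟧ := by
  induction m with
  | zero => rw [canonNat, mk_ordinalSum_zero, natImage, mk_zero, add_zero]
  | succ m ih =>
    exact mk_ordinalSum_leftOnly hG j₀ hj₀ ih (mk_natImage_nonneg p (m + 1))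
      ((mk_natImage_le p (m + 1)).trans (le_add_of_nonneg_left (mk_natImage_nonneg p m)))

structure StepImage (G : PGame) (p : ℕ) (A B WA WB : PGame) (t s : ℕ) : Prop where
  isStep : IsStep A B t
  isStep_image : IsStep WA WB s
  mk_ordinalSum_left : (⟦ordinalSum G A⟧ : Game) = ⟦G⟧ + ⟦WA⟧
  mk_ordinalSum_right : (⟦ordinalSum G B⟧ : Game) = ⟦G⟧ + ⟦WB⟧
  nonneg : 0 ≤ (⟦WA⟧ : Game)
  le_powHalf : (⟦WB⟧ : Game) ≤ ½^p

namespace StepImage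

variable {G A B WA WB : PGame} {p t s : ℕ}

theorem mk_ordinalSum_ball (hG : OptionsApart G p) (h : StepImage G p A B WA WB t s) :
    (⟦ordinalSum G (ball A B)⟧ : Game) = ⟦G⟧ + ⟦ball WA WB⟧ :=
  _root_.mk_ordinalSum_ball hG h.mk_ordinalSum_left h.mk_ordinalSum_right
    (h.nonneg.trans h.isStep_image.le_mk_ball)
    (h.isStep_image.mk_ball_le.trans (h.le_powHalf.trans (le_add_of_nonneg_left h.nonneg)))
    h.le_powHalf

theorem lower (hG : OptionsApart G p) (h : StepImage G p A B WA WB t s) :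
    StepImage G p A (ball A B) WA (ball WA WB) (t + 1) (s + 1) :=
  ⟨h.isStep.lower, h.isStep_image.lower, h.mk_ordinalSum_left, h.mk_ordinalSum_ball hG,
    h.nonneg, h.isStep_image.mk_ball_le.trans h.le_powHalf⟩

theorem upper (hG : OptionsApart G p) (h : StepImage G p A B WA WB t s) :
    StepImage G p (ball A B) B (ball WA WB) WB (t + 1) (s + 1) :=
  ⟨h.isStep.upper, h.isStep_image.upper, h.mk_ordinalSum_ball hG, h.mk_ordinalSum_right,
    h.nonneg.trans h.isStep_image.le_mk_ball, h.le_powHalf⟩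

theorem exists_ordinalSum (hG : OptionsApart G p) (h : StepImage G p A B WA WB t s)
    {q a : ℕ} (ha : a ≤ 2 ^ q) : ∃ K, (⟦K⟧ : Game) = ⟦A⟧ + a • ½^(t + q) ∧
      (⟦ordinalSum G K⟧ : Game) = ⟦G⟧ + ⟦WA⟧ + a • ½^(s + q) := by
  induction q generalizing a A B WA WB t s with
  | zero =>
    obtain rfl | rfl : a = 0 ∨ a = 1 := by omega
    · exact ⟨A, by rw [zero_nsmul, add_zero], by rw [zero_nsmul, add_zero, h.mk_ordinalSum_left]⟩
    · refine ⟨B, by rw [one_nsmul, h.isStep.2]; rfl, ?_⟩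
      rw [one_nsmul, h.mk_ordinalSum_right, h.isStep_image.2, add_assoc]; rfl
  | succ q ih =>
    by_cases hq : a ≤ 2 ^ q
    · obtain ⟨K, hK, hGK⟩ := ih (h.lower hG) hq
      refine ⟨K, ?_, ?_⟩
      · rwa [Nat.add_right_comm] at hK
      · rwa [Nat.add_right_comm] at hGK
    · obtain ⟨K, hK, hGK⟩ := ih (h.upper hG) (a := a - 2 ^ q) (by rw [pow_succ] at ha; omega)
      refine ⟨K, ?_, ?_⟩
      · rw [hK, h.isStep.mk_ball, add_mk_powHalf_add_nsmul _ (by omega)]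
      · rw [hGK, h.isStep_image.mk_ball, ← add_assoc, add_mk_powHalf_add_nsmul _ (by omega)]

end StepImage

theorem balanced_ordinalSum_general (x y : PGame) (p : ℕ)
    (hl : (⟦ball x y⟧ : Game) - ⟦x⟧ = ⟦powHalf p⟧)
    (hr : (⟦y⟧ : Game) - ⟦ball x y⟧ = ⟦powHalf p⟧)
    (m q a : ℕ) (ha : a = 0 ∨ (Odd a ∧ 0 < a ∧ a < 2 ^ q))
    (H : PGame)
    (hHval : (⟦H⟧ : Game) = dyadicVal m 0 + dyadicVal a q) :
    (⟦ordinalSum (ball x y) H⟧ : Game) =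
      ⟦ball x y⟧ + ⟦powHalf p⟧ - ⟦powHalf (p + m)⟧ + dyadicVal a (p + m + q + 1) := by
  have hG : OptionsApart (ball x y) p :=
    ⟨fun _ => (by rw [← hl, add_sub_cancel] : ⟦x⟧ + ½^p = _).le,
      fun _ => (by rw [← hr, add_sub_cancel] : _ = ⟦y⟧).le⟩
  have hy : (⟦y⟧ : Game) ≤ ⟦ball x y⟧ + ½^p := by rw [← hr, add_sub_cancel]
  have hbase : StepImage (ball x y) p (canonNat m) (canonNat (m + 1)) (natImage p m)
      (natImage p (m + 1)) 0 (p + m + 1) :=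
    ⟨isStep_canonNat m, (isStep_natImage p m).lower,
      mk_ordinalSum_canonNat hG PUnit.unit hy m, mk_ordinalSum_canonNat hG PUnit.unit hy (m + 1),
      mk_natImage_nonneg p m, mk_natImage_le p (m + 1)⟩
  have haq : a ≤ 2 ^ q := by
    rcases ha with rfl | ⟨-, -, h⟩
    exacts [Nat.zero_le _, h.le]
  obtain ⟨K, hK, hGK⟩ := hbase.exists_ordinalSum hG haq
  have hHK : (⟦H⟧ : Game) = ⟦K⟧ := by
    rw [hHval, hK, mk_canonNat, dyadicVal, dyadicVal, natCast_zsmul, natCast_zsmul, zero_add]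
  rw [mk_ordinalSum_congr _ hHK, hGK, mk_natImage, dyadicVal, natCast_zsmul,
    Nat.add_right_comm (p + m) 1 q]
  abel

/-- Balanced Ordinal Sum Theorem.  Let `G ≅ ⟨x | y⟩` be a balanced ball of numbers of
radius `1/2^p` (so `G − x = y − G = 1/2^p` as values, with midpoint `n` the value of
`G`).  For integers `m, q ≥ 0` and `a` either `0` or odd with `0 < a < 2^q`, with
`m + a/2^q > 0`, and any number `H` of value `m + a/2^q`:
`G : H = n + 1/2^p − 1/2^{p+m} + a/2^{p+m+q+1}`. -/
theorem balanced_ordinalSum (x y : PGame) (hx : x.Numeric) (hy : y.Numeric)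
    (hG : (ball x y).Numeric) (p : ℕ)
    (hl : (⟦ball x y⟧ : Game) - ⟦x⟧ = ⟦powHalf p⟧)
    (hr : (⟦y⟧ : Game) - ⟦ball x y⟧ = ⟦powHalf p⟧)
    (m q a : ℕ) (ha : a = 0 ∨ (Odd a ∧ 0 < a ∧ a < 2 ^ q))
    (hpos : 0 < (m : ℚ) + (a : ℚ) / 2 ^ q)
    (H : PGame) (hH : H.Numeric)
    (hHval : (⟦H⟧ : Game) = dyadicVal m 0 + dyadicVal a q) :
    (⟦ordinalSum (ball x y) H⟧ : Game) =
      ⟦ball x y⟧ + ⟦powHalf p⟧ - ⟦powHalf (p + m)⟧ + dyadicVal a (p + m + q + 1) :=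
  balanced_ordinalSum_general x y p hl hr m q a ha H hHval
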